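/- Let τ ∈ S^ℕ be acceptable of period N with τ₀ = *, and let k be an integer with N/2 < k < N such that τ_{k+i} = τᵢ for all 1 ≤ i ≤ N−k−1. Define ν₁⋯ν_N ∈ {1,2}^N by νᵢ = τᵢ for 1 ≤ i ≤ N−1 and ν_N = τ_{N−k}, and let e = (ν₁⋯ν_{k−1}ν_k′)^∞ ν₁⋯ν_N and ẽ = (ν₁⋯ν_{N−k−1}ν_{N−k}′ν_{N−k+1}⋯ν_k)^∞ ν₁⋯ν_{N−k−1}ν_{N−k}′ν_{N−k+1}⋯ν_{N−1}ν_N′. Then e and ẽ lie on distinct arc-components of D̂_τ: for all x̂, ŷ ∈ D̂_τ with e(x̂) = e and e(ŷ) = ẽ, no arc in D̂_τ contains both x̂ and ŷ. -/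

import Mathlib

open Topology Filter
open scoped NNReal

/-- The symbol set `S = {*, 1, 2}`. -/
inductive S : Type
  | star : S
  | one : S
  | two : S
  deriving DecidableEq

/-- The topology on `S` generated by the basis `{{1}, {2}, {*,1,2}}`. -/
instance : TopologicalSpace S :=
  TopologicalSpace.generateFrom {{S.one}, {S.two}}

/-- `a ≈ b` iff `a = b` or one of them is `*`. -/
def S.approx (a b : S) : Prop := a = b ∨ a = S.star ∨ b = S.star

/-- The `n`-th iterate `σⁿ` of the shift map on `S^ℕ`. -/
def shiftN (n : ℕ) (x : ℕ → S) : ℕ → S := fun i => x (n + i)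

/-- `τ` is acceptable: for all `n ≥ 1`, `σⁿ(τ) ≈ τ` implies `σⁿ(τ) = τ`. -/
def Acceptable (τ : ℕ → S) : Prop :=
  ∀ n : ℕ, 1 ≤ n → (∀ i, S.approx (τ (n + i)) (τ i)) → shiftN n τ = τ

/-- `τ` has period `N`: `σ^N(τ) = τ` and `σʲ(τ) ≠ τ` for `1 ≤ j < N`. -/
def HasPeriod (τ : ℕ → S) (N : ℕ) : Prop :=
  shiftN N τ = τ ∧ ∀ j : ℕ, 1 ≤ j → j < N → shiftN j τ ≠ τ

/-- `x` is `τ`-admissible: `xₙ = *` implies `σⁿ(x) = τ`, and `σⁿ(x) ≈ τ` implies `σⁿ(x) = τ`. -/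
def Admissible (τ x : ℕ → S) : Prop :=
  (∀ n : ℕ, x n = S.star → shiftN n x = τ) ∧
  (∀ n : ℕ, (∀ i, S.approx (x (n + i)) (τ i)) → shiftN n x = τ)

/-- `D_τ`, the set of `τ`-admissible sequences. -/
def Dtau (τ : ℕ → S) : Set (ℕ → S) := {x | Admissible τ x}

/-- `πₙ(x̂) = (x̂_{n+i})_{i ≥ 0}` for `x̂ ∈ S^ℤ`. -/
def proj (n : ℤ) (x : ℤ → S) : ℕ → S := fun i => x (n + i)

/-- `D̂_τ = {x̂ ∈ S^ℤ : πₙ(x̂) ∈ D_τ for all n}`. -/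
def Dhat (τ : ℕ → S) : Set (ℤ → S) := {x | ∀ n : ℤ, proj n x ∈ Dtau τ}

/-- The backwards itinerary of `x̂`, as a sequence indexed by `ℕ`:
`bitin x̂ m` is the entry of `x̂` at index `-(m+1)`. -/
def bitin (x : ℤ → S) : ℕ → S := fun m => x (-((m : ℤ) + 1))

/-- A left-infinite sequence `e` occurs in `D̂_τ`. -/
def OccursIn (τ : ℕ → S) (e : ℕ → S) : Prop := ∃ x ∈ Dhat τ, bitin x = e

/-- `T_N(e) = {ŷ ∈ D̂_τ : ŷᵢ ≈ eᵢ for all i ≤ N}`, for `N ≤ -1`. -/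
def TsetN (τ : ℕ → S) (N : ℤ) (e : ℕ → S) : Set (ℤ → S) :=
  {y | y ∈ Dhat τ ∧ ∀ m : ℕ, -((m : ℤ) + 1) ≤ N → S.approx (y (-((m : ℤ) + 1))) (e m)}

/-- `T(e) = T₋₁(e)`. -/
def Tset (τ : ℕ → S) (e : ℕ → S) : Set (ℤ → S) := TsetN τ (-1) e

/-- `A` is an arc with endpoints `a` and `b`: a homeomorphic image of `[0,1]`. -/
def IsArc {X : Type*} [TopologicalSpace X] (A : Set X) (a b : X) : Prop :=
  ∃ f : unitInterval → X, Topology.IsEmbedding f ∧ Set.range f = A ∧ f 0 = a ∧ f 1 = b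

/-- `A` is an arc (a homeomorphic image of `[0,1]`). -/
def IsArcSet {X : Type*} [TopologicalSpace X] (A : Set X) : Prop := ∃ a b, IsArc A a b

/-- The set of `k ≥ 1` with `k ≡ i (mod N)` such that `e₋ₖ⋯e₋₁ ≈ τ₀⋯τₖ₋₁`;
`βⁱ(e)` is its maximum (defined iff this set is nonempty). -/
def BetaSet (τ : ℕ → S) (N : ℕ) (e : ℕ → S) (i : ℕ) : Set ℕ :=
  {k | 1 ≤ k ∧ k % N = i ∧ ∀ m, m < k → S.approx (e m) (τ (k - 1 - m))}

/-- `βⁱ(e)` is defined. -/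
def BetaDefined (τ : ℕ → S) (N : ℕ) (e : ℕ → S) (i : ℕ) : Prop := (BetaSet τ N e i).Nonempty

/-- `φ : [0,∞) → D̂_τ` is a parameterization of the ray `Φ`:
a continuous bijection onto `Φ ⊆ D̂_τ`. -/
def IsParamOf (τ : ℕ → S) (φ : ℝ≥0 → (ℤ → S)) (Φ : Set (ℤ → S)) : Prop :=
  Continuous φ ∧ Function.Injective φ ∧ Set.range φ = Φ ∧ Φ ⊆ Dhat τ

/-- The ray `Φ` originates in `T(e)`: it has a parameterization `φ` with `e(φ(0)) = e`. -/
def OriginatesIn (τ : ℕ → S) (Φ : Set (ℤ → S)) (e : ℕ → S) : Prop :=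
  ∃ φ, IsParamOf τ φ Φ ∧ bitin (φ 0) = e

/-- `d` is a metric on `A` compatible with the subspace topology of `A`. -/
def IsCompatibleDist {X : Type*} [TopologicalSpace X] (A : Set X) (d : X → X → ℝ) : Prop :=
  (∀ x ∈ A, ∀ y ∈ A, 0 ≤ d x y) ∧
  (∀ x ∈ A, ∀ y ∈ A, (d x y = 0 ↔ x = y)) ∧
  (∀ x ∈ A, ∀ y ∈ A, d x y = d y x) ∧
  (∀ x ∈ A, ∀ y ∈ A, ∀ z ∈ A, d x z ≤ d x y + d y z) ∧
  (∀ x ∈ A, ∀ u : Set X, u ∈ nhdsWithin x A ↔ ∃ ε > 0, {y | y ∈ A ∧ d x y < ε} ⊆ u)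

/-- The rays `Φ` and `Ψ` are asymptotic: for a metric `d` compatible with the topology of
`D̂_τ`, they admit parameterizations `φ, ψ` with `d(φ(s), ψ(s)) → 0` as `s → ∞`. -/
def AsymptoticRays (τ : ℕ → S) (Φ Ψ : Set (ℤ → S)) : Prop :=
  ∃ d : (ℤ → S) → (ℤ → S) → ℝ, IsCompatibleDist (Dhat τ) d ∧
    ∃ φ ψ, IsParamOf τ φ Φ ∧ IsParamOf τ ψ Ψ ∧
      Tendsto (fun s => d (φ s) (ψ s)) atTop (nhds 0)

/-- The `n`-th folding step for a ray parameterized by `φ`, with fold times `s` and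
backwards itineraries `E n = Rⁿe`:  `s (n+1)` is the minimal time after `s n` at which the
backwards itinerary differs from `E n`, and just after `s (n+1)` the itinerary is `E (n+1)`. -/
def FoldStep (φ : ℝ≥0 → (ℤ → S)) (s : ℕ → ℝ≥0) (E : ℕ → (ℕ → S)) (n : ℕ) : Prop :=
  s n < s (n + 1) ∧
  bitin (φ (s (n + 1))) ≠ E n ∧
  (∀ u : ℝ≥0, s n < u → u < s (n + 1) → bitin (φ u) = E n) ∧
  E (n + 1) ≠ E n ∧
  ∃ ε : ℝ≥0, 0 < ε ∧ ∀ δ : ℝ≥0, 0 < δ → δ < ε → bitin (φ (s (n + 1) + δ)) = E (n + 1)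

/-- The ray parameterized by `φ` has infinite folding pattern with `Rⁿe = E n` for all `n`. -/
def FoldingFrom (φ : ℝ≥0 → (ℤ → S)) (s : ℕ → ℝ≥0) (E : ℕ → (ℕ → S)) : Prop :=
  s 0 = 0 ∧ bitin (φ 0) = E 0 ∧ ∀ n, FoldStep φ s E n

/-- The folding pattern of the ray parameterized by `φ` is defined through step `M`,
with `Rⁿe = E n` for `n ≤ M`. -/
def FoldingUpTo (φ : ℝ≥0 → (ℤ → S)) (s : ℕ → ℝ≥0) (E : ℕ → (ℕ → S)) (M : ℕ) : Prop :=
  s 0 = 0 ∧ bitin (φ 0) = E 0 ∧ ∀ n, n < M → FoldStep φ s E n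

/-- The left-infinite sequence `W^∞V` (infinitely many copies of the word `W`, followed by
the word `V`, ending at index `-1`), in the indexing of `bitin`. -/
def wrep (W V : List S) : ℕ → S := fun m =>
  if m < V.length then V.getD (V.length - 1 - m) S.star
  else W.getD (W.length - 1 - ((m - V.length) % W.length)) S.star

/-- `a ↦ a′` on `{1,2}` (fixing `*`). -/
def flipS : S → S
  | S.star => S.star
  | S.one => S.two
  | S.two => S.one

/-- The word `ν_a ν_{a+1} ⋯ ν_b`. -/
def seg (ν : ℕ → S) (a b : ℕ) : List S := (List.range (b + 1 - a)).map (fun i => ν (a + i))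

/-- `ν₁⋯ν_N` with `νᵢ = τᵢ` for `1 ≤ i ≤ N-1` and `ν_N = τ_{N-k}` (Theorem `case2`). -/
def nuCase2 (τ : ℕ → S) (N k : ℕ) : ℕ → S := fun i => if i = N then τ (N - k) else τ i

/-- `e = (ν₁⋯ν_{k-1}ν_k′)^∞ ν₁⋯ν_N`. -/
def eCase2 (τ : ℕ → S) (N k : ℕ) : ℕ → S :=
  wrep (seg (nuCase2 τ N k) 1 (k - 1) ++ [flipS (nuCase2 τ N k k)])
       (seg (nuCase2 τ N k) 1 N)

/-- `ẽ = (ν₁⋯ν_{N-k-1}ν_{N-k}′ν_{N-k+1}⋯ν_k)^∞ ν₁⋯ν_{N-k-1}ν_{N-k}′ν_{N-k+1}⋯ν_{N-1}ν_N′`. -/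
def etCase2 (τ : ℕ → S) (N k : ℕ) : ℕ → S :=
  wrep (seg (nuCase2 τ N k) 1 (N - k - 1) ++ [flipS (nuCase2 τ N k (N - k))] ++
          seg (nuCase2 τ N k) (N - k + 1) k)
       (seg (nuCase2 τ N k) 1 (N - k - 1) ++ [flipS (nuCase2 τ N k (N - k))] ++
          seg (nuCase2 τ N k) (N - k + 1) (N - 1) ++ [flipS (nuCase2 τ N k N)])

/-!
Along a path `γ` in `D̂_τ`, a coordinate can switch between `1` and `2` only by passing through
`*`, and a `*` at position `n` forces `τ` to be read from `n` on, hence another `*` at `n + N`.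
So if `γ 0` and `γ b` differ at infinitely many negative positions, nested compact sets of times
give some `t ∈ [0, b]` at which `γ t` is starred along a whole residue class mod `N`, i.e. is a
shift of the periodic point `⋯τ₀⋯τ_{N-1}τ₀⋯`. Since `x̂` and `ŷ` differ at the last letter of
every block, such times exist; let `L` be the first one. The left tail of `x̂` is `k`-periodic
with `0 < k < N`, so, `τ` being acceptable, it disagrees with `γ L` at infinitely many non-star
positions of `γ L`; the compactness step on `[0, L]` then gives a periodic time `t ≤ L`, hence
`t = L`, starred at one of these positions, which is absurd.
-/

open Set

lemma S.isOpen_singleton_one : IsOpen ({S.one} : Set S) :=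
  TopologicalSpace.isOpen_generateFrom_of_mem (by simp)

lemma S.isOpen_singleton_two : IsOpen ({S.two} : Set S) :=
  TopologicalSpace.isOpen_generateFrom_of_mem (by simp)

lemma S.isClosed_singleton_star : IsClosed ({S.star} : Set S) := by
  rw [← isOpen_compl_iff, show ({S.star}ᶜ : Set S) = {S.one} ∪ {S.two} by ext s; cases s <;> simp]
  exact S.isOpen_singleton_one.union S.isOpen_singleton_two

lemma S.subsingleton_of_isPreconnected {t : Set S} (ht : IsPreconnected t) (hstar : S.star ∉ t) :
    t.Subsingleton := by
  have hcover : t ⊆ {S.one} ∪ {S.two} := fun s hs => by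
    cases s <;> simp_all
  by_cases hone : (t ∩ {S.one}).Nonempty
  · exact subsingleton_singleton.anti <| ht.subset_left_of_subset_union S.isOpen_singleton_one
      S.isOpen_singleton_two (by simp) hcover hone
  · exact subsingleton_singleton.anti fun s hs =>
      (hcover hs).resolve_left fun h => hone ⟨s, hs, h⟩

lemma IsPreconnected.exists_apply_eq_star {X : Type*} [TopologicalSpace X] {s : Set X}
    (hs : IsPreconnected s) {f : X → S} (hf : ContinuousOn f s) {a b : X} (ha : a ∈ s)
    (hb : b ∈ s) (hab : f a ≠ f b) : ∃ t ∈ s, f t = S.star := by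
  by_contra! h
  refine hab (S.subsingleton_of_isPreconnected (hs.image f hf) ?_ (mem_image_of_mem f ha)
    (mem_image_of_mem f hb))
  rintro ⟨t, ht, hft⟩
  exact h t ht hft

lemma flipS_ne {a : S} (h : a ≠ S.star) : flipS a ≠ a := by
  cases a <;> simp_all [flipS]

lemma IsArcSet.joinedIn {X : Type*} [TopologicalSpace X] {A : Set X} (hA : IsArcSet A) {x y : X}
    (hx : x ∈ A) (hy : y ∈ A) : JoinedIn A x y := by
  obtain ⟨-, -, f, hf, rfl, -⟩ := hA
  have : PathConnectedSpace unitInterval := isPathConnected_iff_pathConnectedSpace.mp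
    ((convex_Icc (0 : ℝ) 1).isPathConnected (nonempty_Icc.2 zero_le_one))
  exact (isPathConnected_range hf.continuous).joinedIn x hx y hy

lemma HasPeriod.periodic {τ : ℕ → S} {N : ℕ} (h : HasPeriod τ N) : Function.Periodic τ N :=
  fun i => by simpa [shiftN, add_comm] using congrFun h.1 i

section Dhat

variable {τ : ℕ → S} {N : ℕ} {z : ℤ → S}

lemma Dhat.apply_add_of_eq_star (hz : z ∈ Dhat τ) {n : ℤ} (hn : z n = S.star) (i : ℕ) :
    z (n + i) = τ i := by
  simpa [shiftN, proj] using congrFun ((hz n).1 0 (by simpa [proj] using hn)) i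

lemma Dhat.apply_eq_star_of_cast_eq (hz : z ∈ Dhat τ) (hτ : Function.Periodic τ N)
    (hτ0 : τ 0 = S.star) {n p : ℤ} (hn : z n = S.star) (hnp : n ≤ p)
    (hcast : (n : ZMod N) = p) : z p = S.star := by
  obtain ⟨i, rfl⟩ := Int.le.dest hnp
  obtain ⟨j, rfl⟩ : N ∣ i := by
    rw [ZMod.intCast_eq_intCast_iff_dvd_sub] at hcast
    exact Int.natCast_dvd_natCast.mp (by simpa using hcast)
  rw [Dhat.apply_add_of_eq_star hz hn, mul_comm]
  simpa [hτ0] using hτ.nat_mul_eq j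

end Dhat

/-- For `z ∈ D̂_τ` this makes `z` a shift of the bi-infinite periodic point `⋯τ₀τ₁⋯τ_{N-1}τ₀⋯`. -/
def StarsOnClass (N : ℕ) (z : ℤ → S) (r : ZMod N) : Prop :=
  ∀ n : ℤ, (n : ZMod N) = r → z n = S.star

lemma isClosed_setOf_starsOnClass (N : ℕ) (r : ZMod N) :
    IsClosed {z : ℤ → S | StarsOnClass N z r} := by
  simp only [StarsOnClass, ofPred_forall]
  exact isClosed_iInter fun n => isClosed_iInter fun _ =>
    S.isClosed_singleton_star.preimage (continuous_apply n : Continuous fun z : ℤ → S => z n)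

lemma StarsOnClass.frequently_eq_star {N : ℕ} [NeZero N] {z : ℤ → S} {r : ZMod N}
    (h : StarsOnClass N z r) : ∃ᶠ n in atBot, z n = S.star := by
  refine frequently_atBot.2 fun a => ⟨a - (a - r.cast) % N, ?_, h _ ?_⟩
  · have : (N : ℤ) ≠ 0 := by exact_mod_cast NeZero.ne N
    have := Int.emod_nonneg (a - r.cast) this
    omega
  · push_cast [ZMod.intCast_mod]
    simp

theorem frequently_ne_of_frequently_star {τ : ℕ → S} (hacc : Acceptable τ) {k : ℕ} (hk : 1 ≤ k)
    (hτk : shiftN k τ ≠ τ) {x z : ℤ → S} (hz : z ∈ Dhat τ)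
    (hstar : ∃ᶠ n in atBot, z n = S.star) (hx : ∀ᶠ n in atBot, x (n - k) = x n) :
    ∃ᶠ n in atBot, x n ≠ z n ∧ z n ≠ S.star := by
  refine fun hagree => hτk (hacc k hk fun i => ?_)
  obtain ⟨B, hB⟩ := eventually_atBot.1 (hx.and hagree)
  obtain ⟨q, hq, hqstar⟩ := frequently_atBot.1 hstar (B - k - i)
  obtain ⟨hper, hki⟩ := hB (q + (k + i : ℕ)) (by push_cast; omega)
  have hi := (hB (q + i) (by omega)).2
  rw [show q + ((k + i : ℕ) : ℤ) - k = q + i by push_cast; ring] at hper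
  simp only [ne_eq, not_and, not_not] at hki hi
  rw [Dhat.apply_add_of_eq_star hz hqstar] at hki hi
  rw [hper] at hi
  unfold S.approx
  grind

section Paths

variable {τ : ℕ → S} {N : ℕ} [NeZero N]

theorem exists_starsOnClass_of_frequently_ne (hτ : Function.Periodic τ N) (hτ0 : τ 0 = S.star)
    {γ : ℝ → ℤ → S} (hγ : Continuous γ) (hmem : ∀ s, γ s ∈ Dhat τ) {b : ℝ} (hb : 0 ≤ b)
    (hfreq : ∃ᶠ n in atBot, γ 0 n ≠ γ b n ∧ γ b n ≠ S.star) :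
    ∃ t ∈ Icc 0 b, ∃ n, (γ 0 n ≠ γ b n ∧ γ b n ≠ S.star) ∧ StarsOnClass N (γ t) n := by
  obtain ⟨r, hr⟩ : ∃ r : ZMod N, ∃ᶠ n in atBot,
      (γ 0 n ≠ γ b n ∧ γ b n ≠ S.star) ∧ (n : ZMod N) = r :=
    frequently_exists.1 (hfreq.mono fun n hn => ⟨_, hn, rfl⟩)
  let G := {n : ℤ // (γ 0 n ≠ γ b n ∧ γ b n ≠ S.star) ∧ (n : ZMod N) = r}
  let T : G → Set ℝ := fun n => Icc 0 b ∩ {t | γ t n = S.star}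
  have hT_closed (n : G) : IsClosed (T n) := isClosed_Icc.inter <|
    S.isClosed_singleton_star.preimage ((continuous_apply n.1).comp hγ)
  have hT_mono : Monotone T := fun n n' hle t ht =>
    ⟨ht.1, Dhat.apply_eq_star_of_cast_eq (hmem t) hτ hτ0 ht.2 hle (n.2.2.trans n'.2.2.symm)⟩
  have hT_ne (n : G) : (T n).Nonempty :=
    isPreconnected_Icc.exists_apply_eq_star ((continuous_apply n.1).comp hγ).continuousOn
      (left_mem_Icc.2 hb) (right_mem_Icc.2 hb) n.2.1.1
  obtain ⟨n₀, hn₀⟩ := hr.exists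
  have : Nonempty G := ⟨⟨n₀, hn₀⟩⟩
  obtain ⟨t, ht⟩ := IsCompact.nonempty_iInter_of_directed_nonempty_isCompact_isClosed T
    hT_mono.directed_ge hT_ne
    (fun n => isCompact_Icc.of_isClosed_subset (hT_closed n) inter_subset_left) hT_closed
  rw [mem_iInter] at ht
  refine ⟨t, (ht ⟨n₀, hn₀⟩).1, n₀, hn₀.1, fun p hp => ?_⟩
  obtain ⟨n, hnp, hn⟩ := frequently_atBot.1 hr p
  exact Dhat.apply_eq_star_of_cast_eq (hmem t) hτ hτ0 (ht ⟨n, hn⟩).2 hnp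
    (hn.2.trans (hn₀.2.symm.trans hp.symm))

theorem not_joinedIn_of_frequently_ne (hτ : Function.Periodic τ N) (hτ0 : τ 0 = S.star)
    {x y : ℤ → S}
    (hx : ∀ z ∈ Dhat τ, (∃ᶠ n in atBot, z n = S.star) → ∃ᶠ n in atBot, x n ≠ z n ∧ z n ≠ S.star)
    (hxy : ∃ᶠ n in atBot, x n ≠ y n ∧ y n ≠ S.star) : ¬ JoinedIn (Dhat τ) x y := by
  intro hjoin
  set γ := hjoin.somePath.extend
  have hγ : Continuous γ := hjoin.somePath.continuous_extend
  have hmem (s : ℝ) : γ s ∈ Dhat τ := by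
    obtain ⟨t, ht⟩ : γ s ∈ range hjoin.somePath := hjoin.somePath.extend_range ▸ mem_range_self s
    exact ht ▸ hjoin.somePath_mem t
  have hγ0 : γ 0 = x := hjoin.somePath.extend_zero
  have hγ1 : γ 1 = y := hjoin.somePath.extend_one
  let F := Icc (0 : ℝ) 1 ∩ {t | ∃ r : ZMod N, StarsOnClass N (γ t) r}
  have hF_closed : IsClosed F := by
    refine isClosed_Icc.inter ?_
    simp only [ofPred_exists]
    exact isClosed_iUnion_of_finite fun r => (isClosed_setOf_starsOnClass N r).preimage hγ
  have hF_ne : F.Nonempty := by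
    obtain ⟨t, ht, n, -, hn⟩ := exists_starsOnClass_of_frequently_ne hτ hτ0 hγ hmem zero_le_one
      (by rwa [hγ0, hγ1])
    exact ⟨t, ht, _, hn⟩
  obtain ⟨L, ⟨hL, r, hr⟩, hL_least⟩ :=
    (isCompact_Icc.of_isClosed_subset hF_closed inter_subset_left).exists_isLeast hF_ne
  obtain ⟨t, ht, n, ⟨-, hn⟩, hstar⟩ := exists_starsOnClass_of_frequently_ne hτ hτ0 hγ hmem hL.1
    (by rw [hγ0]; exact hx _ (hmem L) hr.frequently_eq_star)
  obtain rfl : t = L := ht.2.antisymm (hL_least ⟨⟨ht.1, ht.2.trans hL.2⟩, _, hstar⟩)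
  exact hn (hstar n rfl)

end Paths

@[simp] lemma seg_length (ν : ℕ → S) (a b : ℕ) : (seg ν a b).length = b + 1 - a := by
  simp [seg]

lemma seg_getD (ν : ℕ → S) {a b i : ℕ} (h : i < b + 1 - a) :
    (seg ν a b).getD i S.star = ν (a + i) := by
  simp [seg, List.getD_eq_getElem?_getD, h]

lemma wrep_add_of_length_eq {W V : List S} {p q m : ℕ} (hW : W.length = p) (hV : V.length = q)
    (hm : q ≤ m) : wrep W V (m + p) = wrep W V m := by
  subst hW hV
  simp only [wrep, if_neg (by omega : ¬m + W.length < V.length), if_neg (not_lt.2 hm)]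
  rw [show m + W.length - V.length = m - V.length + W.length by omega, Nat.add_mod_right]

lemma wrep_add_mul_of_length_eq {W V : List S} {p q : ℕ} (hW : W.length = p) (hV : V.length = q)
    (j : ℕ) : wrep W V (q + j * p) = W.getD (p - 1) S.star := by
  subst hW hV
  simp [wrep]

section Case2

variable {τ : ℕ → S} {N k : ℕ}

lemma eCase2_add (hk1 : N < 2 * k) (hk2 : k < N) {m : ℕ} (hm : N ≤ m) :
    eCase2 τ N k (m + k) = eCase2 τ N k m :=
  wrep_add_of_length_eq (by simp; omega) (by simp) hm

lemma eCase2_add_mul (hk1 : N < 2 * k) (hk2 : k < N) (j : ℕ) :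
    eCase2 τ N k (N + j * k) = flipS (τ k) := by
  rw [eCase2, wrep_add_mul_of_length_eq (by simp; omega) (by simp) j]
  simp [nuCase2, hk2.ne]

lemma etCase2_add_mul (hk1 : N < 2 * k) (hk2 : k < N) (j : ℕ) :
    etCase2 τ N k (N + j * k) = τ k := by
  rw [etCase2, wrep_add_mul_of_length_eq (by simp; omega) (by simp; omega) j]
  rw [List.getD_append_right _ _ _ _ (by simp; omega), seg_getD _ (by simp; omega)]
  convert_to nuCase2 τ N k k = τ k using 2
  · simp
    omega
  · simp [nuCase2, hk2.ne]

end Case2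

lemma tendsto_neg_succ_atTop_atBot : Tendsto (fun m : ℕ => -((m : ℤ) + 1)) atTop atBot :=
  tendsto_atTop_atBot.2 fun b => ⟨b.natAbs, fun m hm => by omega⟩

lemma eventually_sub_eq_of_bitin_add {x : ℤ → S} {k M : ℕ}
    (h : ∀ m ≥ M, bitin x (m + k) = bitin x m) : ∀ᶠ n in atBot, x (n - k) = x n := by
  refine eventually_atBot.2 ⟨-(M + 1), fun n hn => ?_⟩
  obtain ⟨m, rfl⟩ : ∃ m : ℕ, n = -((m : ℤ) + 1) := ⟨(-n - 1).toNat, by omega⟩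
  have hm := h m (by omega)
  simp only [bitin] at hm
  rw [← hm]
  congr 1
  push_cast
  ring

theorem case2_distinct_arc_components_general
    (τ : ℕ → S) (hacc : Acceptable τ) (N : ℕ) (hper : HasPeriod τ N)
    (hτ0 : τ 0 = S.star) (hτi : ∀ i, 1 ≤ i → i < N → τ i ≠ S.star)
    (k : ℕ) (hk1 : N < 2 * k) (hk2 : k < N) :
    ∀ x ∈ Dhat τ, ∀ y ∈ Dhat τ,
      bitin x = eCase2 τ N k → bitin y = etCase2 τ N k →
      ∀ A : Set (ℤ → S), A ⊆ Dhat τ → IsArcSet A → ¬(x ∈ A ∧ y ∈ A) := by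
  intro x _ y _ hx hy A hA hArc ⟨hxA, hyA⟩
  have : NeZero N := ⟨by omega⟩
  have hτk : τ k ≠ S.star := hτi k (by omega) hk2
  have hxk : ∀ᶠ n in atBot, x (n - k) = x n :=
    eventually_sub_eq_of_bitin_add fun m hm => by rw [hx]; exact eCase2_add hk1 hk2 hm
  have hxy : ∃ᶠ n in atBot, x n ≠ y n ∧ y n ≠ S.star := by
    refine tendsto_neg_succ_atTop_atBot.frequently (frequently_atTop.2 fun a =>
      ⟨N + a * k, by nlinarith, ?_⟩)
    change bitin x _ ≠ bitin y _ ∧ bitin y _ ≠ S.star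
    rw [hx, hy, eCase2_add_mul hk1 hk2, etCase2_add_mul hk1 hk2]
    exact ⟨flipS_ne hτk, hτk⟩
  refine not_joinedIn_of_frequently_ne hper.periodic hτ0 (fun z hz hzs => ?_) hxy
    ((hArc.joinedIn hxA hyA).mono hA)
  exact frequently_ne_of_frequently_star hacc (by omega) (hper.2 k (by omega) hk2) hz hzs hxk

/-- The backwards itineraries `e` and `ẽ` of Theorem `case2` lie on distinct
arc-components of `D̂_τ`. -/
theorem case2_distinct_arc_components
    (τ : ℕ → S) (hacc : Acceptable τ) (N : ℕ) (hper : HasPeriod τ N)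
    (hτ0 : τ 0 = S.star) (hτi : ∀ i, 1 ≤ i → i < N → τ i ≠ S.star)
    (k : ℕ) (hk1 : N < 2 * k) (hk2 : k < N)
    (hmatch : ∀ i, 1 ≤ i → i ≤ N - k - 1 → τ (k + i) = τ i) :
    ∀ x ∈ Dhat τ, ∀ y ∈ Dhat τ,
      bitin x = eCase2 τ N k → bitin y = etCase2 τ N k →
      ∀ A : Set (ℤ → S), A ⊆ Dhat τ → IsArcSet A → ¬(x ∈ A ∧ y ∈ A) :=
  case2_distinct_arc_components_general τ hacc N hper hτ0 hτi k hk1 hk2
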